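/- arXiv:1909.12918 — 2 statements merged into one kernel-verified Lean document; each statement's English description precedes it below -/
import Mathlib

section
/- Let P be a finite Frobenius poset and let F = F_S ∈ (g_A(P))* be a small Frobenius functional such that U_F(P) is a filter of P, D_F(P) is an order ideal of P, and B_F(P) = ∅. Then every eigenvalue of ad(F̂) = [F̂,·] acting on g_A(P) is equal to 0 or 1, i.e., the spectrum of g_A(P) consists of 0's and 1's. -/
/-!
Common definitions: for a finite poset `P`, identified with `{1,…,n}` via a linear
extension, represented by a relation `le` on `Fin n`, the type-A Lie poset algebra
`gA le` is the Lie subalgebra of `sl(n, ℂ)` spanned by the matrix units `E p q`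
for `p ≺ q` together with all trace-zero diagonal matrices (here realized as a
submodule of complex `n × n` matrices, which is closed under the commutator
bracket).  `gFull le` is the full Lie poset algebra `g(P)` (with all diagonal
matrices).  `FS S` is the functional `F_S = ∑_{(p,q) ∈ S} E*_{p,q}`.
-/

namespace LiePosets

noncomputable section

open scoped BigOperators

/-- Complex `n × n` matrices. -/
abbrev M (n : ℕ) : Type := Matrix (Fin n) (Fin n) ℂ

/-- The strict relation `p ≺ q` attached to a poset relation `le`. -/
def Strict {n : ℕ} (le : Fin n → Fin n → Prop) (p q : Fin n) : Prop := le p q ∧ p ≠ q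

/-- The type-A Lie poset algebra `g_A(P)`: trace-zero matrices supported on
relations of the poset (off-diagonal entries vanish off the strict relations). -/
def gA {n : ℕ} (le : Fin n → Fin n → Prop) : Submodule ℂ (M n) where
  carrier := {A | Matrix.trace A = 0 ∧ ∀ p q : Fin n, p ≠ q → ¬ le p q → A p q = 0}
  add_mem' := by
    rintro A B ⟨hA, hA'⟩ ⟨hB, hB'⟩
    exact ⟨by simp [hA, hB], fun p q h1 h2 => by
      simp [Matrix.add_apply, hA' p q h1 h2, hB' p q h1 h2]⟩
  zero_mem' := ⟨by simp, fun p q _ _ => by simp⟩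
  smul_mem' := by
    rintro c A ⟨hA, hA'⟩
    exact ⟨by simp [hA], fun p q h1 h2 => by
      simp [Matrix.smul_apply, hA' p q h1 h2]⟩

/-- The Lie poset algebra `g(P)` (all diagonal matrices allowed). -/
def gFull {n : ℕ} (le : Fin n → Fin n → Prop) : Submodule ℂ (M n) where
  carrier := {A | ∀ p q : Fin n, p ≠ q → ¬ le p q → A p q = 0}
  add_mem' := by
    rintro A B hA hB p q h1 h2
    simp [Matrix.add_apply, hA p q h1 h2, hB p q h1 h2]
  zero_mem' := fun p q _ _ => by simp
  smul_mem' := by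
    rintro c A hA p q h1 h2
    simp [Matrix.smul_apply, hA p q h1 h2]

/-- The functional `F_S = ∑_{(p,q) ∈ S} E*_{p,q}` reading off the sum of the
coefficients of the matrix entries indexed by `S`. -/
def FS {n : ℕ} (S : Finset (Fin n × Fin n)) : M n →ₗ[ℂ] ℂ where
  toFun A := ∑ pq ∈ S, A pq.1 pq.2
  map_add' A B := by simp [Matrix.add_apply, Finset.sum_add_distrib]
  map_smul' c A := by simp [Matrix.smul_apply, Finset.mul_sum]

/-- `F` is a Frobenius functional on the Lie subalgebra (submodule) `g`:
the kernel of the Kirillov form `B_F(x, y) = F ⁅x, y⁆` on `g` is trivial. -/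
def IsFrobeniusOn {n : ℕ} (g : Submodule ℂ (M n)) (F : M n →ₗ[ℂ] ℂ) : Prop :=
  ∀ x ∈ g, (∀ y ∈ g, F ⁅x, y⁆ = 0) → x = 0

/-- `H` is a principal element for `F` on `g`:  `B_F(H, ·) = F` on `g`. -/
def IsPrincipal {n : ℕ} (g : Submodule ℂ (M n)) (F : M n →ₗ[ℂ] ℂ) (H : M n) : Prop :=
  H ∈ g ∧ ∀ y ∈ g, F ⁅H, y⁆ = F y

/-- The adjoint action `ad H = ⁅H, -⁆` as a linear endomorphism of matrices. -/
def adE {n : ℕ} (H : M n) : Module.End ℂ (M n) :=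
  LinearMap.mulLeft ℂ H - LinearMap.mulRight ℂ H

/-- Multiplicity of `μ` as an eigenvalue of `ad H` acting on `g`. -/
def eigMult {n : ℕ} (g : Submodule ℂ (M n)) (H : M n) (μ : ℂ) : ℕ :=
  Module.finrank ℂ ↥(g ⊓ Module.End.eigenspace (adE H) μ)

/-- `g` has a binary spectrum: for any Frobenius functional `F` and corresponding
principal element `H`, the multiset of eigenvalues of `ad H` on `g` consists of an
equal number of `0`'s and `1`'s. -/
def HasBinarySpectrum {n : ℕ} (g : Submodule ℂ (M n)) : Prop :=
  ∀ (F : M n →ₗ[ℂ] ℂ) (H : M n), IsFrobeniusOn g F → IsPrincipal g F H →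
    eigMult g H 0 = eigMult g H 1 ∧
    eigMult g H 0 + eigMult g H 1 = Module.finrank ℂ ↥g

/-- The kernel of the Kirillov form `B_F` on `g`. -/
def kirKer {n : ℕ} (g : Submodule ℂ (M n)) (F : M n →ₗ[ℂ] ℂ) : Submodule ℂ (M n) where
  carrier := {x | x ∈ g ∧ ∀ y ∈ g, F ⁅x, y⁆ = 0}
  zero_mem' := ⟨g.zero_mem, fun y _ => by simp [Ring.lie_def]⟩
  add_mem' := by
    rintro a b ⟨ha, ha'⟩ ⟨hb, hb'⟩
    exact ⟨g.add_mem ha hb, fun y hy => by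
      have h1 := ha' y hy
      have h2 := hb' y hy
      simp only [Ring.lie_def, add_mul, mul_add, map_sub, map_add] at h1 h2 ⊢
      linear_combination h1 + h2⟩
  smul_mem' := by
    rintro c a ⟨ha, ha'⟩
    exact ⟨g.smul_mem c ha, fun y hy => by
      have h1 := ha' y hy
      simp only [Ring.lie_def, smul_mul_assoc, mul_smul_comm, map_sub, map_smul,
        smul_eq_mul] at h1 ⊢
      linear_combination c * h1⟩

/-- The index of the Lie algebra `g`: the minimum over all functionals of the
dimension of the kernel of the corresponding Kirillov form. -/
def lieIndex {n : ℕ} (g : Submodule ℂ (M n)) : ℕ :=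
  sInf {d : ℕ | ∃ F : M n →ₗ[ℂ] ℂ, d = Module.finrank ℂ ↥(kirKer g F)}

/-- The underlying undirected graph of the directed graph `Γ_{F_S}`. -/
def gammaGraph {n : ℕ} (S : Finset (Fin n × Fin n)) : SimpleGraph (Fin n) where
  Adj p q := p ≠ q ∧ ((p, q) ∈ S ∨ (q, p) ∈ S)
  symm := ⟨fun p q h => ⟨h.1.symm, h.2.symm⟩⟩
  loopless := ⟨fun p h => h.1 rfl⟩

/-- `F_S` is small: `S` consists of strict relations of the poset and `Γ_{F_S}`
is a spanning tree of the comparability graph. -/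
def Small {n : ℕ} (le : Fin n → Fin n → Prop) (S : Finset (Fin n × Fin n)) : Prop :=
  (∀ pq ∈ S, Strict le pq.1 pq.2) ∧ (gammaGraph S).IsTree

/-- `U_{F_S}(P)`: the sinks of `Γ_{F_S}`. -/
def sinks {n : ℕ} (S : Finset (Fin n × Fin n)) : Set (Fin n) :=
  {p | (∃ q, (q, p) ∈ S) ∧ ∀ q, (p, q) ∉ S}

/-- `D_{F_S}(P)`: the sources of `Γ_{F_S}`. -/
def sources {n : ℕ} (S : Finset (Fin n × Fin n)) : Set (Fin n) :=
  {p | (∃ q, (p, q) ∈ S) ∧ ∀ q, (q, p) ∉ S}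

/-- `B_{F_S}(P)`: the vertices of `Γ_{F_S}` that are neither sinks nor sources. -/
def betweens {n : ℕ} (S : Finset (Fin n × Fin n)) : Set (Fin n) :=
  {p | (∃ q, (p, q) ∈ S) ∧ ∃ q, (q, p) ∈ S}

/-- `U` is a filter (up-closed set) of the poset. -/
def IsPosetFilter {n : ℕ} (le : Fin n → Fin n → Prop) (U : Set (Fin n)) : Prop :=
  ∀ p ∈ U, ∀ q, le p q → q ∈ U

/-- `D` is an order ideal (down-closed set) of the poset. -/
def IsPosetIdeal {n : ℕ} (le : Fin n → Fin n → Prop) (D : Set (Fin n)) : Prop :=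
  ∀ p ∈ D, ∀ q, le q p → q ∈ D

/-- Helper to build elements of `Fin n` from natural numbers. -/
def fmk (n : ℕ) (h : 0 < n) (i : ℕ) : Fin n := ⟨i % n, Nat.mod_lt _ h⟩

/-- Restriction of a matrix along an embedding of index types. -/
def restrictMat {N K : ℕ} (f : Fin K → Fin N) (B : M N) : M K :=
  Matrix.of fun p q => B (f p) (f q)

/-!
Since `B_F(P) = ∅`, every edge of `Γ_F` runs from a non-sink to a sink, so the trace-free
diagonal matrix built from the indicator `χ` of the non-sinks satisfies `B_F(H, ·) = F`; by
uniqueness it is `F̂`. Then `ad F̂` scales `E_{p,q}` by `χ p - χ q ∈ {-1, 0, 1}`, and `-1` would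
need a sink `p ≺ q` with `q` not a sink, which is excluded because the sinks form a filter.
-/

theorem adE_apply {n : ℕ} (H A : M n) : adE H A = ⁅H, A⁆ := by
  simp [adE, Ring.lie_def]

def centeredDiagonal {n : ℕ} (d : Fin n → ℂ) : M n :=
  Matrix.diagonal fun p => d p - (∑ r, d r) / n

theorem trace_centeredDiagonal {n : ℕ} (d : Fin n → ℂ) : (centeredDiagonal d).trace = 0 := by
  rcases eq_or_ne n 0 with rfl | hn
  · simp
  · have : (n : ℂ) ≠ 0 := Nat.cast_ne_zero.mpr hn
    simp [centeredDiagonal, Matrix.trace_diagonal, Finset.sum_sub_distrib, mul_div_cancel₀ _ this]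

theorem centeredDiagonal_mem_gA {n : ℕ} (le : Fin n → Fin n → Prop) (d : Fin n → ℂ) :
    centeredDiagonal d ∈ gA le :=
  ⟨trace_centeredDiagonal d, fun _ _ hpq _ => Matrix.diagonal_apply_ne _ hpq⟩

theorem lie_centeredDiagonal_apply {n : ℕ} (d : Fin n → ℂ) (A : M n) (p q : Fin n) :
    ⁅centeredDiagonal d, A⁆ p q = (d p - d q) * A p q := by
  simp only [centeredDiagonal, Ring.lie_def, Matrix.sub_apply, Matrix.diagonal_mul,
    Matrix.mul_diagonal]
  ring

theorem exists_apply_ne_zero_and_eq_sub_of_lie_centeredDiagonal {n : ℕ} {d : Fin n → ℂ}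
    {A : M n} {μ : ℂ} (hA : A ≠ 0) (hμ : ⁅centeredDiagonal d, A⁆ = μ • A) :
    ∃ p q, A p q ≠ 0 ∧ μ = d p - d q := by
  obtain ⟨p, q, hpq⟩ : ∃ p q, A p q ≠ 0 := by
    by_contra! h
    exact hA (Matrix.ext h)
  have hentry := congrFun (congrFun hμ p) q
  rw [lie_centeredDiagonal_apply, Matrix.smul_apply, smul_eq_mul] at hentry
  exact ⟨p, q, hpq, (mul_right_cancel₀ hpq hentry).symm⟩

theorem IsPrincipal.eq {n : ℕ} {g : Submodule ℂ (M n)} {F : M n →ₗ[ℂ] ℂ} {H H' : M n}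
    (hH : IsPrincipal g F H) (hF : IsFrobeniusOn g F) (hH' : IsPrincipal g F H') : H = H' := by
  refine sub_eq_zero.mp (hF _ (g.sub_mem hH.1 hH'.1) fun y hy => ?_)
  have h := hH.2 y hy
  have h' := hH'.2 y hy
  simp only [Ring.lie_def, sub_mul, mul_sub, map_sub] at h h' ⊢
  linear_combination h - h'

theorem notMem_sinks_of_mem {n : ℕ} {S : Finset (Fin n × Fin n)} {p q : Fin n}
    (h : (p, q) ∈ S) : p ∉ sinks S :=
  fun hp => hp.2 q h

theorem mem_sinks_of_mem_of_betweens_eq_empty {n : ℕ} {S : Finset (Fin n × Fin n)}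
    (hB : betweens S = ∅) {p q : Fin n} (h : (p, q) ∈ S) : q ∈ sinks S := by
  refine ⟨⟨p, h⟩, fun r hr => ?_⟩
  have : q ∈ betweens S := ⟨⟨r, hr⟩, ⟨p, h⟩⟩
  simp [hB] at this

theorem isPrincipal_centeredDiagonal_indicator_compl_sinks {n : ℕ} (le : Fin n → Fin n → Prop)
    {S : Finset (Fin n × Fin n)} (hB : betweens S = ∅) :
    IsPrincipal (gA le) (FS S) (centeredDiagonal ((sinks S)ᶜ.indicator 1)) := by
  refine ⟨centeredDiagonal_mem_gA le _, fun y _ => Finset.sum_congr rfl fun pq hpq => ?_⟩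
  rw [lie_centeredDiagonal_apply, Set.indicator_of_mem (notMem_sinks_of_mem hpq),
    Set.indicator_of_notMem
      (not_not.mpr (mem_sinks_of_mem_of_betweens_eq_empty hB hpq))]
  simp

theorem spectrum_zero_one_of_small_frobenius_functional_general
    (n : ℕ) (le : Fin n → Fin n → Prop)
    (S : Finset (Fin n × Fin n))
    (hFrob : IsFrobeniusOn (gA le) (FS S))
    (hU : IsPosetFilter le (sinks S))
    (hB : betweens S = ∅) :
    ∀ H : M n, IsPrincipal (gA le) (FS S) H →
      ∀ μ : ℂ, (∃ A ∈ gA le, A ≠ 0 ∧ adE H A = μ • A) → μ = 0 ∨ μ = 1 := by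
  rintro H hH μ ⟨A, hAg, hA0, hAμ⟩
  obtain rfl := hH.eq hFrob (isPrincipal_centeredDiagonal_indicator_compl_sinks le hB)
  rw [adE_apply] at hAμ
  obtain ⟨p, q, hApq, rfl⟩ := exists_apply_ne_zero_and_eq_sub_of_lie_centeredDiagonal hA0 hAμ
  rcases eq_or_ne p q with rfl | hpq
  · simp
  have hle : le p q := by
    by_contra h
    exact hApq (hAg.2 p q hpq h)
  have hsink : p ∈ sinks S → q ∈ sinks S := fun hp => hU p hp q hle
  by_cases hp : p ∈ sinks S <;> by_cases hq : q ∈ sinks S <;> simp_all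

/-- under the same hypotheses as Statement 0, every eigenvalue of
`ad F̂` acting on `g_A(P)` is `0` or `1`. -/
theorem spectrum_zero_one_of_small_frobenius_functional
    (n : ℕ) (le : Fin n → Fin n → Prop)
    (hrefl : ∀ p, le p p)
    (hantisymm : ∀ p q, le p q → le q p → p = q)
    (htrans : ∀ p q r, le p q → le q r → le p r)
    (hlin : ∀ p q, le p q → p ≤ q)
    (hFrobPoset : ∃ G : M n →ₗ[ℂ] ℂ, IsFrobeniusOn (gA le) G)
    (S : Finset (Fin n × Fin n))
    (hsmall : Small le S)
    (hFrob : IsFrobeniusOn (gA le) (FS S))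
    (hU : IsPosetFilter le (sinks S))
    (hD : IsPosetIdeal le (sources S))
    (hB : betweens S = ∅) :
    ∀ H : M n, IsPrincipal (gA le) (FS S) H →
      ∀ μ : ℂ, (∃ A ∈ gA le, A ≠ 0 ∧ adE H A = μ • A) → μ = 0 ∨ μ = 1 :=
  spectrum_zero_one_of_small_frobenius_functional_general n le S hFrob hU hB

end
end LiePosets
end

section
/- Let P = {p₁,p₂,p₃,p₄} be the poset with relations p₁ ≼ p₃, p₂ ≼ p₃ and p₃ ≼ p₄. Then F = E*_{p₁,p₄} + E*_{p₂,p₄} + E*_{p₂,p₃} is a Frobenius functional on g_A(P), and the spectrum of g_A(P) is binary: ad(F̂) has eigenvalue 0 with multiplicity 4 and eigenvalue 1 with multiplicity 4. -/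
/-!
Common definitions: for a finite poset `P`, identified with `{1,…,n}` via a linear
extension, represented by a relation `le` on `Fin n`, the type-A Lie poset algebra
`gA le` is the Lie subalgebra of `sl(n, ℂ)` spanned by the matrix units `E p q`
for `p ≺ q` together with all trace-zero diagonal matrices (here realized as a
submodule of complex `n × n` matrices, which is closed under the commutator
bracket).  `gFull le` is the full Lie poset algebra `g(P)` (with all diagonal
matrices).  `FS S` is the functional `F_S = ∑_{(p,q) ∈ S} E*_{p,q}`.
-/

namespace LiePosets

noncomputable section

open scoped BigOperators

/-- The poset `P₂* = {p₁,p₂,p₃,p₄}` with `p₁, p₂ ≼ p₃ ≼ p₄`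
(elements `pᵢ` indexed as `i - 1 : Fin 4`). -/
def leP2s : Fin 4 → Fin 4 → Prop := fun p q =>
  p = q ∨ (p.val, q.val) ∈ ({(0,2),(1,2),(0,3),(1,3),(2,3)} : Set (ℕ × ℕ))

/-- The index set of `F = E*_{p₁,p₄} + E*_{p₂,p₄} + E*_{p₂,p₃}`. -/
def SP2s : Finset (Fin 4 × Fin 4) := {(0,3),(1,3),(1,2)}

/-!
Testing `B_F(x, ·) = r • F` against the basis `E_{p₁p₃}, E_{p₂p₃}, E_{p₁p₄}, E_{p₂p₄}, E_{p₃p₄}`,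
`E_{p₁p₁} - E_{p₄p₄}, E_{p₂p₂} - E_{p₄p₄}, E_{p₃p₃} - E_{p₄p₄}` of `g_A(P)` gives a linear system
whose only solution is `x = r • F̂` with `F̂ = diag(1/2, 1/2, -1/2, -1/2)`: for `r = 0` this says
that `F` is Frobenius, for `r = 1` that `F̂` is the principal element.

Since `F̂` is diagonal, `ad F̂` scales `E_{pq}` by `F̂_p - F̂_q`, so each eigenspace of `ad F̂` on
`g_A(P)` consists of the trace-zero matrices supported on a set of positions: the four `E_{pq}` with
`p ∈ {p₁, p₂}`, `q ∈ {p₃, p₄}` for the eigenvalue `1`, and the diagonal together with `E_{p₃p₄}`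
(five positions, minus one for the trace) for the eigenvalue `0`.
-/

open Matrix Module LinearMap

section General

variable {n : ℕ}

def sl (n : ℕ) : Submodule ℂ (M n) := ker (traceLinearMap (Fin n) ℂ ℂ)

lemma mem_sl {A : M n} : A ∈ sl n ↔ trace A = 0 := Iff.rfl

def supported (S : Finset (Fin n × Fin n)) : Submodule ℂ (M n) :=
  Submodule.span ℂ (stdBasis ℂ (Fin n) (Fin n) '' S)

lemma mem_supported {S : Finset (Fin n × Fin n)} {A : M n} :
    A ∈ supported S ↔ ∀ i j, (i, j) ∉ S → A i j = 0 := by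
  rw [supported, Basis.mem_span_image]
  simp [Set.subset_def, stdBasis, not_imp_comm]

lemma finrank_supported (S : Finset (Fin n × Fin n)) : finrank ℂ (supported S) = S.card := by
  rw [supported, Set.image_eq_range]
  exact (finrank_span_eq_card
    ((stdBasis ℂ _ _).linearIndependent.comp _ Subtype.val_injective)).trans (by simp)

lemma supported_le_sl {S : Finset (Fin n × Fin n)} (hS : ∀ i, (i, i) ∉ S) :
    supported S ≤ sl n := fun A hA => by
  simp [mem_sl, Matrix.trace, mem_supported.1 hA _ _ (hS _)]

lemma finrank_supported_inf_sl_add_one {S : Finset (Fin n × Fin n)} {k : Fin n} (hk : (k, k) ∈ S) :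
    finrank ℂ ↥(supported S ⊓ sl n) + 1 = S.card := by
  set f := (traceLinearMap (Fin n) ℂ ℂ).domRestrict (supported S)
  have hrange : range f = ⊤ := by
    refine eq_top_iff.2 fun c _ => ?_
    have hc : single k k c ∈ supported S := mem_supported.2 fun i j hij => by
      rw [single_apply_of_ne]
      rintro ⟨rfl, rfl⟩
      exact hij hk
    exact ⟨⟨_, hc⟩, by simp [f]⟩
  have hker : finrank ℂ (ker f) = finrank ℂ ↥(supported S ⊓ sl n) := by
    rw [← Submodule.finrank_map_subtype_eq, ker_domRestrict, Submodule.map_comap_subtype, sl]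
  rw [← finrank_supported, ← f.finrank_range_add_finrank_ker, hrange, finrank_top, finrank_self,
    hker, add_comm]

lemma adE_diagonal_apply (d : Fin n → ℂ) (A : M n) (i j : Fin n) :
    adE (diagonal d) A i j = (d i - d j) * A i j := by
  simp [adE]
  ring

lemma mem_eigenspace_adE_diagonal {d : Fin n → ℂ} {μ : ℂ} {A : M n} :
    A ∈ End.eigenspace (adE (diagonal d)) μ ↔ ∀ i j, d i - d j ≠ μ → A i j = 0 := by
  rw [End.mem_eigenspace_iff, ← Matrix.ext_iff]
  refine forall₂_congr fun i j => ?_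
  rw [adE_diagonal_apply, Matrix.smul_apply, smul_eq_mul, mul_eq_mul_right_iff, or_iff_not_imp_left]

lemma supported_inf_eigenspace_adE_diagonal {T S : Finset (Fin n × Fin n)} {d : Fin n → ℂ} {μ : ℂ}
    (hS : ∀ i j, (i, j) ∈ S ↔ (i, j) ∈ T ∧ d i - d j = μ) :
    supported T ⊓ End.eigenspace (adE (diagonal d)) μ = supported S := by
  ext A
  simp only [Submodule.mem_inf, mem_supported, mem_eigenspace_adE_diagonal, hS]
  refine ⟨fun ⟨hT, hμ⟩ i j hij => ?_, fun h => ⟨fun i j hT => h i j fun hij => hT hij.1,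
    fun i j hμ => h i j fun hij => hμ hij.2⟩⟩
  by_cases hiT : (i, j) ∈ T
  exacts [hμ i j fun h => hij ⟨hiT, h⟩, hT i j hiT]

variable {le : Fin n → Fin n → Prop}

lemma gA_eq_supported_inf_sl {T : Finset (Fin n × Fin n)} (hT : ∀ i j, (i, j) ∈ T ↔ i = j ∨ le i j) :
    gA le = supported T ⊓ sl n := by
  ext A
  simp only [Submodule.mem_inf, mem_supported, hT, mem_sl, not_or, and_imp]
  exact and_comm

lemma single_mem_gA {p q : Fin n} (hpq : le p q) (hne : p ≠ q) (c : ℂ) : single p q c ∈ gA le := by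
  refine ⟨by simp [trace_single_eq_of_ne _ _ _ hne], fun i j hij hle => ?_⟩
  rw [single_apply_of_ne]
  rintro ⟨rfl, rfl⟩
  exact hle hpq

lemma diagonal_mem_gA {d : Fin n → ℂ} (hd : ∑ i, d i = 0) : diagonal d ∈ gA le :=
  ⟨by simpa [trace_diagonal] using hd, fun _ _ hij _ => diagonal_apply_ne _ hij⟩

lemma gA_inf_eigenspace_adE_diagonal {T S : Finset (Fin n × Fin n)} {d : Fin n → ℂ} {μ : ℂ}
    (hT : ∀ i j, (i, j) ∈ T ↔ i = j ∨ le i j) (hS : ∀ i j, (i, j) ∈ S ↔ (i, j) ∈ T ∧ d i - d j = μ) :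
    gA le ⊓ End.eigenspace (adE (diagonal d)) μ = supported S ⊓ sl n := by
  rw [gA_eq_supported_inf_sl hT, inf_right_comm, supported_inf_eigenspace_adE_diagonal hS]

end General

instance : DecidableRel leP2s := fun p q => by unfold leP2s; infer_instance

def hP2s : Fin 4 → ℂ := ![1 / 2, 1 / 2, -1 / 2, -1 / 2]

def FhatP2s : M 4 := diagonal hP2s

lemma FS_SP2s_apply (A : M 4) : FS SP2s A = A 0 3 + A 1 3 + A 1 2 := by
  simp [FS, SP2s]
  ring

lemma eq_smul_FhatP2s_of_FS_lie (r : ℂ) {x : M 4} (hx : x ∈ gA leP2s)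
    (h : ∀ y ∈ gA leP2s, FS SP2s ⁅x, y⁆ = r * FS SP2s y) : x = r • FhatP2s := by
  obtain ⟨htrace, hsupp⟩ := hx
  have hzero : ∀ i j, ¬ leP2s i j → x i j = 0 := fun i j hij =>
    hsupp i j (by rintro rfl; exact hij (Or.inl rfl)) hij
  have htr : x 0 0 + x 1 1 + x 2 2 + x 3 3 = 0 := by
    simpa [Matrix.trace, Fin.sum_univ_four] using htrace
  have t02 := h _ (single_mem_gA (p := 0) (q := 2) (by decide) (by decide) 1)
  have t12 := h _ (single_mem_gA (p := 1) (q := 2) (by decide) (by decide) 1)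
  have t03 := h _ (single_mem_gA (p := 0) (q := 3) (by decide) (by decide) 1)
  have t13 := h _ (single_mem_gA (p := 1) (q := 3) (by decide) (by decide) 1)
  have t23 := h _ (single_mem_gA (p := 2) (q := 3) (by decide) (by decide) 1)
  have d0 := h (diagonal ![1, 0, 0, -1]) (diagonal_mem_gA (by simp [Fin.sum_univ_four]))
  have d1 := h (diagonal ![0, 1, 0, -1]) (diagonal_mem_gA (by simp [Fin.sum_univ_four]))
  have d2 := h (diagonal ![0, 0, 1, -1]) (diagonal_mem_gA (by simp [Fin.sum_univ_four]))
  simp only [Ring.lie_def, FS_SP2s_apply] at t02 t12 t03 t13 t23 d0 d1 d2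
  simp [Matrix.mul_apply, Fin.sum_univ_four, hzero, leP2s] at t02 t12 t03 t13 t23 d0 d1 d2
  rw [t02, neg_zero, zero_add] at t12
  have h03 : x 0 3 = 0 := by linear_combination (-3/4 : ℂ) * d0 + (1/4 : ℂ) * d1 + (1/4 : ℂ) * d2
  have h13 : x 1 3 = 0 := by linear_combination (1/2 : ℂ) * d0 - (1/2 : ℂ) * d1 - (1/2 : ℂ) * d2
  have h12 : x 1 2 = 0 := by linear_combination (-1/4 : ℂ) * d0 - (1/4 : ℂ) * d1 + (3/4 : ℂ) * d2
  have h02 : x 0 2 = 0 := by linear_combination t23 - h12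
  have h00 : x 0 0 = r / 2 := by
    linear_combination (1/4 : ℂ) * t12 + (3/4 : ℂ) * t03 - (1/2 : ℂ) * t13 + (1/4 : ℂ) * htr
  have h11 : x 1 1 = r / 2 := by
    linear_combination (1/4 : ℂ) * t12 - (1/4 : ℂ) * t03 + (1/2 : ℂ) * t13 + (1/4 : ℂ) * htr
  have h22 : x 2 2 = -r / 2 := by
    linear_combination (-3/4 : ℂ) * t12 - (1/4 : ℂ) * t03 + (1/2 : ℂ) * t13 + (1/4 : ℂ) * htr
  have h33 : x 3 3 = -r / 2 := by
    linear_combination (1/4 : ℂ) * t12 - (1/4 : ℂ) * t03 - (1/2 : ℂ) * t13 + (1/4 : ℂ) * htr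
  ext i j
  fin_cases i <;> fin_cases j <;>
    simp [FhatP2s, hP2s, hzero, leP2s, h00, h11, h22, h33, h02, h12, h03, h13, t02] <;> ring

def relP2s : Finset (Fin 4 × Fin 4) :=
  {(0, 0), (1, 1), (2, 2), (3, 3), (0, 2), (1, 2), (0, 3), (1, 3), (2, 3)}

lemma mem_relP2s : ∀ i j, (i, j) ∈ relP2s ↔ i = j ∨ leP2s i j := by decide

lemma finrank_gA_leP2s : finrank ℂ (gA leP2s) = 8 := by
  have h := finrank_supported_inf_sl_add_one (S := relP2s) (k := 0) (by decide)
  rw [gA_eq_supported_inf_sl mem_relP2s]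
  exact Nat.add_right_cancel (h.trans rfl)

lemma eigMult_FhatP2s_zero : eigMult (gA leP2s) FhatP2s 0 = 4 := by
  have hS : ∀ i j, (i, j) ∈ ({(0, 0), (1, 1), (2, 2), (3, 3), (2, 3)} : Finset (Fin 4 × Fin 4)) ↔
      (i, j) ∈ relP2s ∧ hP2s i - hP2s j = 0 := by
    intro i j
    fin_cases i <;> fin_cases j <;> norm_num [relP2s, hP2s, Fin.ext_iff]
  have h := finrank_supported_inf_sl_add_one ((hS 0 0).2 ⟨by decide, sub_self _⟩)
  rw [eigMult, FhatP2s, gA_inf_eigenspace_adE_diagonal mem_relP2s hS]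
  exact Nat.add_right_cancel (h.trans rfl)

lemma eigMult_FhatP2s_one : eigMult (gA leP2s) FhatP2s 1 = 4 := by
  have hS : ∀ i j, (i, j) ∈ ({(0, 2), (1, 2), (0, 3), (1, 3)} : Finset (Fin 4 × Fin 4)) ↔
      (i, j) ∈ relP2s ∧ hP2s i - hP2s j = 1 := by
    intro i j
    fin_cases i <;> fin_cases j <;> norm_num [relP2s, hP2s, Fin.ext_iff]
  rw [eigMult, FhatP2s, gA_inf_eigenspace_adE_diagonal mem_relP2s hS,
    inf_eq_left.2 (supported_le_sl (by decide)), finrank_supported]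
  rfl

/-- `F` is Frobenius on `g_A(P₂*)` and the spectrum is binary:
eigenvalues `0` and `1`, each with multiplicity `4`. -/
theorem P2star_frobenius_binary_spectrum :
    IsFrobeniusOn (gA leP2s) (FS SP2s) ∧
    ∀ H : M 4, IsPrincipal (gA leP2s) (FS SP2s) H →
      eigMult (gA leP2s) H 0 = 4 ∧ eigMult (gA leP2s) H 1 = 4 ∧
      eigMult (gA leP2s) H 0 + eigMult (gA leP2s) H 1 = Module.finrank ℂ ↥(gA leP2s) := by
  refine ⟨fun x hx hB => ?_, fun H hH => ?_⟩
  · simpa using eq_smul_FhatP2s_of_FS_lie 0 hx (by simpa using hB)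
  · obtain rfl : H = FhatP2s := by
      simpa using eq_smul_FhatP2s_of_FS_lie 1 hH.1 (by simpa using hH.2)
    rw [eigMult_FhatP2s_zero, eigMult_FhatP2s_one, finrank_gA_leP2s]
    exact ⟨rfl, rfl, rfl⟩

end
end LiePosets
end
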